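/- Define w(x) = (21/13)x plus a bonus: 997/3900 if x > 1/2, 256/3900 if 1/3 < x ≤ 1/2, 216/3900 if 1/4 < x ≤ 1/3, 40/3900 if 1/6 < x ≤ 1/4, and 0 if 0 ≤ x ≤ 1/6. Then for any finite multiset B of reals in [0,1] with total sum at most 1, the total weight ∑_{x∈B} w(x) is at most 581/300. -/

import Mathlib

/-!
Write `w1 x = 21/13 * x + bonus x`. The linear part contributes at most `21/13` to a bin, and
`581/300 - 21/13 = 1253/3900`, so it suffices to bound the total bonus. The bonus depends only on
the size class of an item, recorded as the number `k ∈ {6, 4, 3, 2, 0}` of twelfths that the item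
exceeds; a nonzero class is exceeded strictly, so the classes of the items in a bin sum to at most
`11`. A small knapsack enumeration then shows the bonuses sum to at most `997 + 256 = 1253` (in
units of `1/3900`).
-/

noncomputable def w1 (x : ℝ) : ℝ :=
  21/13 * x +
    if x > 1/2 then 997/3900
    else if x > 1/3 then 256/3900
    else if x > 1/4 then 216/3900
    else if x > 1/6 then 40/3900
    else 0

theorem Multiset.sum_map_eq_sum_count_nsmul {ι M : Type*} [DecidableEq ι] [AddCommMonoid M]
    {C : Multiset ι} {S : Finset ι} (hC : C.toFinset ⊆ S) (g : ι → M) :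
    (C.map g).sum = ∑ i ∈ S, C.count i • g i := by
  rw [Finset.sum_multiset_map_count]
  refine Finset.sum_subset hC fun i _ hi => ?_
  rw [Multiset.count_eq_zero_of_notMem (by simpa using hi), zero_nsmul]

noncomputable def sizeClass (x : ℝ) : ℕ :=
  if x > 1/2 then 6 else if x > 1/3 then 4 else if x > 1/4 then 3 else if x > 1/6 then 2 else 0

def classBonus : ℕ → ℕ
  | 6 => 997
  | 4 => 256
  | 3 => 216
  | 2 => 40
  | _ => 0

theorem sizeClass_mem (x : ℝ) : sizeClass x ∈ ({0, 2, 3, 4, 6} : Finset ℕ) := by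
  unfold sizeClass; split_ifs <;> simp

theorem sizeClass_le (x : ℝ) (hx : 0 ≤ x) : (sizeClass x : ℝ) ≤ 12 * x := by
  unfold sizeClass; split_ifs <;> push_cast <;> linarith

theorem sizeClass_lt (x : ℝ) (hx : sizeClass x ≠ 0) : (sizeClass x : ℝ) < 12 * x := by
  unfold sizeClass at *; split_ifs at * <;> first | (push_cast; linarith) | simp at hx

theorem toFinset_map_sizeClass_subset (B : Multiset ℝ) :
    (B.map sizeClass).toFinset ⊆ {0, 2, 3, 4, 6} := fun k hk => by
  obtain ⟨x, -, rfl⟩ := Multiset.mem_map.1 (Multiset.mem_toFinset.1 hk)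
  exact sizeClass_mem x

theorem w1_eq (x : ℝ) : w1 x = 21/13 * x + classBonus (sizeClass x) / 3900 := by
  unfold w1 sizeClass; split_ifs <;> simp [classBonus]

theorem knapsack_count_le (a b c d : ℕ) (h : 6*a + 4*b + 3*c + 2*d ≤ 11) :
    997*a + 256*b + 216*c + 40*d ≤ 1253 := by
  have ha : a ≤ 1 := by omega
  have hb : b ≤ 2 := by omega
  have hc : c ≤ 3 := by omega
  have hd : d ≤ 5 := by omega
  interval_cases a <;> interval_cases b <;> interval_cases c <;> omega

theorem sum_classBonus_le {C : Multiset ℕ} (hC : C.toFinset ⊆ {0, 2, 3, 4, 6})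
    (hsum : C.sum ≤ 11) : (C.map classBonus).sum ≤ 1253 := by
  rw [Multiset.sum_map_eq_sum_count_nsmul hC]
  rw [← C.map_id', Multiset.sum_map_eq_sum_count_nsmul hC] at hsum
  simp only [smul_eq_mul, Finset.mem_insert, OfNat.zero_ne_ofNat, Finset.mem_singleton, or_self,
    not_false_eq_true, Finset.sum_insert, mul_zero, Nat.reduceEqDiff, Finset.sum_singleton, zero_add,
    classBonus] at hsum ⊢
  have := knapsack_count_le (C.count 6) (C.count 4) (C.count 3) (C.count 2) (by omega)
  omega

theorem sum_sizeClass_le (B : Multiset ℝ) (hB : ∀ x ∈ B, 0 ≤ x) (hsum : B.sum ≤ 1) :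
    (B.map sizeClass).sum ≤ 11 := by
  by_cases h : ∃ x ∈ B, sizeClass x ≠ 0
  · have : ((B.map sizeClass).sum : ℝ) < 12 := calc
      ((B.map sizeClass).sum : ℝ) = (B.map fun x => (sizeClass x : ℝ)).sum := by
        simp [Nat.cast_multiset_sum]
      _ < (B.map fun x => 12 * x).sum :=
        Multiset.sum_lt_sum (fun x hx => sizeClass_le x (hB x hx))
          (h.imp fun x ⟨hx, hx0⟩ => ⟨hx, sizeClass_lt x hx0⟩)
      _ ≤ 12 := by rw [Multiset.sum_map_mul_left, Multiset.map_id']; linarith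
    have : (B.map sizeClass).sum < 12 := by exact_mod_cast this
    omega
  · push Not at h
    have : (B.map sizeClass).sum = 0 := Multiset.sum_eq_zero (by simpa using h)
    omega

theorem stmt1 (B : Multiset ℝ) (hB : ∀ x ∈ B, 0 ≤ x ∧ x ≤ 1)
    (hsum : B.sum ≤ 1) : (B.map w1).sum ≤ 581/300 := by
  have hw : (B.map w1).sum = 21/13 * B.sum + ((B.map sizeClass).map classBonus).sum / 3900 := by
    simp only [w1_eq, Multiset.sum_map_add, Multiset.sum_map_div, Nat.cast_multiset_sum,
      Multiset.map_map, Function.comp_def]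
    congr 1
    simpa using Multiset.sum_map_mul_left (s := B) (a := (21/13 : ℝ)) (f := id)
  have hbonus : ((B.map sizeClass).map classBonus).sum ≤ 1253 :=
    sum_classBonus_le (toFinset_map_sizeClass_subset B) (sum_sizeClass_le B (fun x hx => (hB x hx).1) hsum)
  have : (((B.map sizeClass).map classBonus).sum : ℝ) ≤ 1253 := by exact_mod_cast hbonus
  rw [hw]; linarith
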